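/- arXiv:2111.11283 — 2 statements merged into one kernel-verified Lean document; each statement's English description precedes it below -/
import Mathlib

section
/- If t(λ) is a nonnegative trigonometric polynomial on [-π, π], not identically zero, then G(t^α) > 0 for every α ∈ ℝ, i.e., ln t ∈ L¹([-π, π]). -/
open MeasureTheory Real Set

/-!
Any finite sum of exponentials `x ↦ ∑ c_k e^{ω_k x}` is real-analytic, so on a compact interval
it has finitely many zeros, each of finite order unless the sum vanishes identically. Near a zero
of order `m` the logarithm of its modulus behaves like `m log |x - x₀|`, which is integrable; this
is Mathlib's `MeromorphicOn.intervalIntegrable_log_norm`.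
-/

theorem analyticAt_cexp_mul_ofReal (ω : ℂ) (x : ℝ) :
    AnalyticAt ℝ (fun y : ℝ => Complex.exp (ω * y)) x :=
  analyticAt_cexp.restrictScalars.comp (analyticAt_const.mul (Complex.ofRealCLM.analyticAt x))

theorem analyticOnNhd_sum_mul_cexp {ι : Type*} (s : Finset ι) (c ω : ι → ℂ) :
    AnalyticOnNhd ℝ (fun x : ℝ => ∑ k ∈ s, c k * Complex.exp (ω k * x)) univ := fun x _ =>
  Finset.analyticAt_fun_sum s fun k _ => analyticAt_const.mul (analyticAt_cexp_mul_ofReal (ω k) x)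

theorem intervalIntegrable_log_norm_sum_mul_cexp {ι : Type*} (s : Finset ι) (c ω : ι → ℂ)
    (a b : ℝ) :
    IntervalIntegrable (fun x : ℝ => log ‖∑ k ∈ s, c k * Complex.exp (ω k * x)‖) volume a b :=
  ((analyticOnNhd_sum_mul_cexp s c ω).mono (subset_univ _)).meromorphicOn.intervalIntegrable_log_norm

theorem log_trig_poly_integrable_general (t : ℝ → ℝ) (N : ℕ) (c : ℤ → ℂ)
    (ht : ∀ x : ℝ, (t x : ℂ) =
      ∑ k ∈ Finset.Icc (-(N : ℤ)) (N : ℤ), c k * Complex.exp (Complex.I * k * x)) :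
    IntegrableOn (fun x => Real.log (t x)) (Icc (-π) π) ∧
    ∀ α : ℝ,
      0 < Real.exp ((2 * π)⁻¹ * ∫ x in Icc (-π) π, Real.log (t x ^ α)) := by
  refine ⟨?_, fun α => Real.exp_pos _⟩
  have hlog : (fun x => log (t x)) = fun x : ℝ =>
      log ‖∑ k ∈ Finset.Icc (-(N : ℤ)) (N : ℤ), c k * Complex.exp (Complex.I * k * x)‖ := by
    funext x
    rw [← ht x, Complex.norm_real, norm_eq_abs, log_abs]
  rw [hlog, ← intervalIntegrable_iff_integrableOn_Icc_of_le (neg_le_self pi_pos.le)]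
  exact intervalIntegrable_log_norm_sum_mul_cexp _ c (fun k => Complex.I * k) (-π) π

theorem log_trig_poly_integrable (t : ℝ → ℝ) (N : ℕ) (c : ℤ → ℂ)
    (ht : ∀ x : ℝ, (t x : ℂ) =
      ∑ k ∈ Finset.Icc (-(N : ℤ)) (N : ℤ), c k * Complex.exp (Complex.I * k * x))
    (hpos : ∀ x : ℝ, 0 ≤ t x) (hne : ∃ x : ℝ, t x ≠ 0) :
    IntegrableOn (fun x => Real.log (t x)) (Icc (-π) π) ∧
    ∀ α : ℝ,
      0 < Real.exp ((2 * π)⁻¹ * ∫ x in Icc (-π) π, Real.log (t x ^ α)) :=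
  log_trig_poly_integrable_general t N c ht
end

section
/- For the Pollaczek–Szegő function f_a(λ) = e^{(2λ−π)φ(λ)}/cosh(πφ(λ)) for 0 ≤ λ ≤ π (extended evenly), with φ(λ) = (a/2)cot λ and a > 0, one has f_a(λ) ~ 2e^a·exp(−aπ/|λ|) as λ → 0. -/
/-!
With `φ = (a/2) cot λ`, the identity `e^{u-v} / cosh v = 2 e^{u-2v} / (1 + e^{-2v})` turns the
ratio `f_a(λ) / (2 e^a e^{-aπ/λ})` into
`exp (a (λ cot λ - 1) - aπ (cot λ - 1/λ)) / (1 + exp (-aπ cot λ))`.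
Everything then follows from `cot λ - 1/λ = O(λ)` as `λ → 0⁺`: it gives `λ cot λ → 1`,
`cot λ - 1/λ → 0` and `cot λ → +∞`, so the numerator and the denominator both tend to `1`.
-/

open Real Filter

/-- The Pollaczek–Szegő spectral density `f_a`, defined for `0 ≤ λ ≤ π` by
`f_a(λ) = e^{(2λ-π)φ(λ)}/cosh(πφ(λ))` with `φ(λ) = (a/2)·cot λ`, and extended
evenly: `f_a(-λ) = f_a(λ)`. -/
noncomputable def pollaczekSzego (a : ℝ) (x : ℝ) : ℝ :=
  Real.exp ((2 * |x| - π) * (a / 2 * (Real.cos |x| / Real.sin |x|))) /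
    Real.cosh (π * (a / 2 * (Real.cos |x| / Real.sin |x|)))

open Topology

namespace Real

lemma abs_cot_sub_inv_le {t : ℝ} (ht₀ : 0 < t) (ht₁ : t ≤ 1) : |cot t - t⁻¹| ≤ t := by
  have hsin_lower := sin_gt_sub_cube ht₀
  have hsin_pos : 0 < sin t := sin_pos_of_pos_of_lt_pi ht₀ (by linarith [pi_gt_three])
  have hcos_lower : 1 - t ^ 2 / 2 ≤ cos t := one_sub_sq_div_two_le_cos
  have hden : 0 < t * sin t := mul_pos ht₀ hsin_pos
  have hnum : |t * cos t - sin t| ≤ t ^ 3 / 2 := by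
    rw [abs_le]
    constructor <;> nlinarith [sin_le ht₀.le, cos_le_one t]
  have hsin_half : t / 2 ≤ sin t := by nlinarith
  have hcot : cot t - t⁻¹ = (t * cos t - sin t) / (t * sin t) := by
    rw [cot_eq_cos_div_sin]
    field_simp
  rw [hcot, abs_div, abs_of_pos hden, div_le_iff₀ hden]
  nlinarith [mul_le_mul_of_nonneg_left hsin_half (sq_nonneg t)]

lemma tendsto_cot_sub_inv_nhdsGT_zero :
    Tendsto (fun t => cot t - t⁻¹) (𝓝[>] 0) (𝓝 0) := by
  refine squeeze_zero_norm' ?_ (tendsto_nhdsWithin_of_tendsto_nhds tendsto_id)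
  filter_upwards [Ioc_mem_nhdsGT one_pos] with t ht
  exact abs_cot_sub_inv_le ht.1 ht.2

lemma tendsto_mul_cot_nhdsGT_zero : Tendsto (fun t => t * cot t) (𝓝[>] 0) (𝓝 1) := by
  have h := (tendsto_nhdsWithin_of_tendsto_nhds tendsto_id).mul
    tendsto_cot_sub_inv_nhdsGT_zero |>.add_const 1
  rw [zero_mul, zero_add] at h
  refine h.congr' ?_
  filter_upwards [self_mem_nhdsWithin] with t (ht : 0 < t)
  simp [mul_sub, ht.ne']

lemma tendsto_cot_nhdsGT_zero : Tendsto cot (𝓝[>] 0) atTop :=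
  (tendsto_cot_sub_inv_nhdsGT_zero.add_atTop tendsto_inv_nhdsGT_zero).congr fun t => by ring

lemma exp_sub_div_cosh (u v : ℝ) :
    exp (u - v) / cosh v = 2 * exp (u - 2 * v) / (1 + exp (-(2 * v))) := by
  have hnum : exp (u - v) = exp (u - 2 * v) * exp v := by rw [← exp_add]; ring_nf
  have hden : exp v + exp (-v) = exp v * (1 + exp (-(2 * v))) := by
    rw [mul_add, mul_one, ← exp_add]; ring_nf
  rw [cosh_eq, hnum, hden]
  field_simp

end Real

lemma pollaczekSzego_div_eq (a x : ℝ) :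
    pollaczekSzego a x / (2 * exp a * exp (-(a * π) / |x|)) =
      exp (a * (|x| * cot |x| - 1) - a * π * (cot |x| - |x|⁻¹)) /
        (1 + exp (-(a * π * cot |x|))) := by
  set t := |x|
  have hsplit : (2 * t - π) * (a / 2 * cot t) = a * t * cot t - π * (a / 2 * cot t) := by ring
  have hexp : exp (a * t * cot t - 2 * (π * (a / 2 * cot t))) =
      exp (a * (t * cot t - 1) - a * π * (cot t - t⁻¹)) * exp a * exp (-(a * π) / t) := by
    rw [← exp_add, ← exp_add]
    ring_nf
  rw [pollaczekSzego, ← cot_eq_cos_div_sin, hsplit, exp_sub_div_cosh, hexp,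
    show 2 * (π * (a / 2 * cot t)) = a * π * cot t by ring]
  field_simp

theorem pollaczekSzego_asymptotic_at_zero (a : ℝ) (ha : 0 < a) :
    Tendsto (fun x =>
        pollaczekSzego a x / (2 * Real.exp a * Real.exp (-(a * π) / |x|)))
      (nhdsWithin 0 {x : ℝ | x ≠ 0}) (nhds 1) := by
  have hnum : Tendsto (fun t => exp (a * (t * cot t - 1) - a * π * (cot t - t⁻¹)))
      (𝓝[>] 0) (𝓝 1) := by
    simpa using (((tendsto_mul_cot_nhdsGT_zero.sub_const 1).const_mul a).sub
      (tendsto_cot_sub_inv_nhdsGT_zero.const_mul (a * π))).rexp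
  have hden : Tendsto (fun t => 1 + exp (-(a * π * cot t))) (𝓝[>] 0) (𝓝 1) := by
    simpa using (tendsto_exp_neg_atTop_nhds_zero.comp
      (tendsto_cot_nhdsGT_zero.const_mul_atTop (by positivity))).const_add 1
  have hratio : Tendsto (fun t => exp (a * (t * cot t - 1) - a * π * (cot t - t⁻¹)) /
      (1 + exp (-(a * π * cot t)))) (𝓝[>] 0) (𝓝 1) := by
    simpa only [Pi.div_def, div_one] using hnum.div hden one_ne_zero
  simp only [pollaczekSzego_div_eq]
  exact hratio.comp tendsto_abs_nhdsNE_zero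
end
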